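/- Fix a finite set I of agents, a finite set C of categories, capacities q_c ∈ ℕ, a set C* ⊆ C of preferential treatment categories, and a precedence order whose restriction to C is a strict total order. Let P and P' be priority profiles such that P' is obtained from P by agent i hiding categories. Let μ be an eligibility-compliant matching for the sequential reserve system with profile P that has maximum cardinality, is a maximum beneficiary assignment, and respects precedence over categories, and let μ' be such a matching for the system with profile P'. If μ(i) = ∅, then μ'(i) = ∅. -/

import Mathlib

open Finset

variable {I C : Type*}

/-- Agent `i` is eligible for category `c` when `i ≻_c ∅`. -/
def Eligible (prio : C → Option I → Option I → Prop) (i : I) (c : C) : Prop :=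
  prio c (some i) none

/-- `μ` is a matching: the set of agents assigned to each category `c`
has at most `q c` elements. -/
def IsMatching [Fintype I] [DecidableEq C] (q : C → ℕ) (μ : I → Option C) : Prop :=
  ∀ c : C, (Finset.univ.filter (fun i => μ i = some c)).card ≤ q c

/-- `μ` is eligibility-compliant: assigned agents are eligible. -/
def Compliant (prio : C → Option I → Option I → Prop) (μ : I → Option C) : Prop :=
  ∀ (i : I) (c : C), μ i = some c → Eligible prio i c

/-- The number of agents matched under `μ`. -/
def matchedCount [Fintype I] (μ : I → Option C) : ℕ :=
  (Finset.univ.filter (fun i => (μ i).isSome)).card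

/-- `μ` has maximum cardinality among eligibility-compliant matchings. -/
def MaxCard [Fintype I] [DecidableEq C] (q : C → ℕ)
    (prio : C → Option I → Option I → Prop) (μ : I → Option C) : Prop :=
  ∀ μ' : I → Option C, IsMatching q μ' → Compliant prio μ' →
    matchedCount μ' ≤ matchedCount μ

/-- Non-wastefulness: an eligible unmatched agent implies the category is full. -/
def NonWasteful [Fintype I] [DecidableEq C] (q : C → ℕ)
    (prio : C → Option I → Option I → Prop) (μ : I → Option C) : Prop :=
  ∀ (i : I) (c : C), Eligible prio i c → μ i = none →
    (Finset.univ.filter (fun j => μ j = some c)).card = q c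

/-- Respect for priorities: a matched agent has higher priority (at its
category) than every unmatched agent. -/
def RespectsPriorities (prio : C → Option I → Option I → Prop)
    (μ : I → Option C) : Prop :=
  ∀ (i i' : I) (c : C), μ i = some c → μ i' = none → prio c (some i) (some i')

/-- `μ'` is obtained from `μ` by a swap step at category `c`: an unmatched
agent `i`, eligible for `c`, replaces the `≻_c`-least agent `i'` currently
assigned to `c`, where `i ≻_c i'`. -/
def SwapStep (prio : C → Option I → Option I → Prop) (c : C)
    (μ μ' : I → Option C) : Prop :=
  ∃ i i' : I,
    μ i = none ∧ Eligible prio i c ∧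
    μ i' = some c ∧
    (∀ j : I, μ j = some c → j ≠ i' → prio c (some j) (some i')) ∧
    prio c (some i) (some i') ∧
    μ' i = some c ∧ μ' i' = none ∧
    (∀ j : I, j ≠ i → j ≠ i' → μ' j = μ j)

/-- One swap step between eligibility-compliant matchings. -/
def SwapRel [Fintype I] [DecidableEq C] (q : C → ℕ)
    (prio : C → Option I → Option I → Prop) (μ μ' : I → Option C) : Prop :=
  IsMatching q μ ∧ Compliant prio μ ∧ IsMatching q μ' ∧ Compliant prio μ' ∧
    ∃ c : C, SwapStep prio c μ μ'

/-- `μ` is terminal: no swap step applies to `μ`. -/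
def Terminal (prio : C → Option I → Option I → Prop) (μ : I → Option C) : Prop :=
  ¬ ∃ (i i' : I) (c : C),
      μ i = none ∧ Eligible prio i c ∧ μ i' = some c ∧
      (∀ j : I, μ j = some c → j ≠ i' → prio c (some j) (some i')) ∧
      prio c (some i) (some i')

/-- The strict part `▷` of the precedence preorder, extended to `C ∪ {∅}`
by `c ▷ ∅` for every category `c`. -/
def StrictPrec (prec : C → C → Prop) : Option C → Option C → Prop
  | some c, some c' => prec c c' ∧ ¬ prec c' c
  | some _, none => True
  | none, _ => False

/-- The number of agents assigned to preferential treatment categories. -/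
def benefCount [Fintype I] [DecidableEq C] (Cstar : Finset C)
    (μ : I → Option C) : ℕ :=
  ∑ c ∈ Cstar, (Finset.univ.filter (fun i => μ i = some c)).card

/-- `μ` is a maximum beneficiary assignment. -/
def MaxBenef [Fintype I] [DecidableEq C] (q : C → ℕ)
    (prio : C → Option I → Option I → Prop) (Cstar : Finset C)
    (μ : I → Option C) : Prop :=
  ∀ μ' : I → Option C, IsMatching q μ' → Compliant prio μ' →
    benefCount Cstar μ' ≤ benefCount Cstar μ

/-- Order preservation by swapping. -/
def OrderPresSwap (prio : C → Option I → Option I → Prop) (prec : C → C → Prop)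
    (μ : I → Option C) : Prop :=
  ¬ ∃ (i j : I) (ci cj : C),
      μ i = some ci ∧ μ j = some cj ∧
      StrictPrec prec (some cj) (some ci) ∧
      prio cj (some i) (some j) ∧
      Eligible prio j ci ∧ Eligible prio i cj

/-- Respect for precedence over categories. -/
def RespectsPrec [Fintype I] [DecidableEq C] (q : C → ℕ)
    (prio : C → Option I → Option I → Prop) (Cstar : Finset C)
    (prec : C → C → Prop) (μ : I → Option C) : Prop :=
  ¬ ∃ (i j : I) (cj : C),
      μ j = some cj ∧
      StrictPrec prec (some cj) (μ i) ∧
      prio cj (some i) (some j) ∧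
      ∃ μ' : I → Option C,
        IsMatching q μ' ∧ Compliant prio μ' ∧
        (∀ (k : I) (ck : C), μ k = some ck →
          StrictPrec prec (some ck) (some cj) → μ' k = μ k) ∧
        (∀ ℓ : I, μ ℓ = some cj → prio cj (some ℓ) (some i) → μ' ℓ = μ ℓ) ∧
        μ' i = some cj ∧
        MaxCard q prio μ' ∧ MaxBenef q prio Cstar μ'

/-- Order preservation for a hybrid sequential reserve system with open
categories `c01` (processed first) and `c02` (processed last). -/
def OrderPresHybrid (prio : C → Option I → Option I → Prop) (Cstar : Finset C)
    (c01 c02 : C) (μ : I → Option C) : Prop :=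
  ∀ (i j : I) (cj : C), μ j = some cj → prio cj (some i) (some j) →
    ((∀ ci : C, μ i = some ci → (ci ∈ Cstar ∨ ci = c02) →
        Eligible prio j ci → cj ≠ c01) ∧
     ((cj ∈ Cstar ∨ cj = c01) → Eligible prio i cj → μ i ≠ some c02))

/-- `P'` is an `i`-improvement of `P`: the orders agree off `i`, and `i`'s
priority weakly increases in every category. -/
def Improves (i : I) (P P' : C → Option I → Option I → Prop) : Prop :=
  ∀ c : C,
    (∀ x y : Option I, x ≠ some i → y ≠ some i → (P' c x y ↔ P c x y)) ∧
    (∀ x : Option I, x ≠ some i → P c (some i) x → P' c (some i) x)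


/-!
Hiding categories only takes eligibilities away from `i`, so `μ`, which leaves `i` unmatched,
is still optimal and respects precedence under `P'`. It therefore suffices to compare two such
matchings `ν`, `ν'` for one profile with `ν u = ∅ ≠ ν' u`. Starting from `u`, follow an
alternating path: after an agent that `ν'` places in `f` comes a new agent that `ν` places in `f`
but `ν'` does not. If there is none, `f` has a free seat under `ν`, and switching the path to `ν'`
matches one more agent. If the path reaches an agent unmatched under `ν'`, switching `ν` and `ν'`
on the path preserves the load of every category, hence optimality; at the `▷`-first category
`c` the path touches, the `≻_c`-highest agent involved then witnesses a precedence violation for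
whichever of `ν`, `ν'` does not assign it to `c`.
-/

theorem exists_forall_rel_of_isStrictTotalOrder {α : Type*} [Finite α] (r : α → α → Prop)
    [IsStrictTotalOrder α r] {s : Set α} (hs : s.Nonempty) :
    ∃ a ∈ s, ∀ b ∈ s, b ≠ a → r a b := by
  obtain ⟨a, ha, hmin⟩ := (Finite.wellFounded_of_trans_of_irrefl r).has_min s hs
  refine ⟨a, ha, fun b hb hba => ?_⟩
  rcases trichotomous_of r a b with h | rfl | h
  · exact h
  · exact absurd rfl hba
  · exact absurd h (hmin b hb)

theorem isStrictTotalOrder_strictPrec {prec : C → C → Prop}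
    (hTrans : ∀ a b c : C, prec a b → prec b c → prec a c)
    (hTotal : ∀ a b : C, prec a b ∨ prec b a)
    (hAnti : ∀ a b : C, prec a b → prec b a → a = b) :
    IsStrictTotalOrder C fun a b => StrictPrec prec (some a) (some b) where
  trichotomous a b hab hba := by
    rcases hTotal a b with h | h
    · exact hAnti a b h (by_contra fun h' => hab ⟨h, h'⟩)
    · exact hAnti a b (by_contra fun h' => hba ⟨h, h'⟩) h
  irrefl a h := h.2 h.1
  trans a b c hab hbc := ⟨hTrans a b c hab.1 hbc.1, fun hca => hbc.2 (hTrans c a b hca hab.1)⟩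

section Assignments

variable [Fintype I]

/-- Capacities, cardinality and beneficiary count depend on `μ` only through this multiset. -/
def assignments (μ : I → Option C) : Multiset (Option C) :=
  (univ : Finset I).val.map μ

theorem assignments_eq_add [DecidableEq I] (T : Finset I) (μ : I → Option C) :
    assignments μ = T.val.map μ + (univ \ T).val.map μ := by
  rw [assignments, ← Multiset.map_add, ← disjUnion_val _ _ disjoint_sdiff, disjUnion_eq_union,
    union_sdiff_of_subset (subset_univ T)]

theorem assignments_piecewise_add [DecidableEq I] (T : Finset I) (f g : I → Option C) :
    assignments (T.piecewise f g) + T.val.map g = assignments g + T.val.map f := by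
  have hT : T.val.map (T.piecewise f g) = T.val.map f :=
    Multiset.map_congr rfl fun x hx => T.piecewise_eq_of_mem f g hx
  have hTc : (univ \ T).val.map (T.piecewise f g) = (univ \ T).val.map g :=
    Multiset.map_congr rfl fun x hx => T.piecewise_eq_of_notMem f g (mem_sdiff.mp hx).2
  rw [assignments_eq_add T, assignments_eq_add T g, hT, hTc]
  abel

variable [DecidableEq C]

theorem card_filter_eq_count_assignments (μ : I → Option C) (o : Option C) :
    #{x | μ x = o} = (assignments μ).count o := by
  simp [assignments, Multiset.count_map, Finset.card, Finset.filter_val, eq_comm]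

theorem isMatching_iff_count {q : C → ℕ} {μ : I → Option C} :
    IsMatching q μ ↔ ∀ c, (assignments μ).count (some c) ≤ q c := by
  simp only [IsMatching, card_filter_eq_count_assignments]

theorem matchedCount_add_count_none (μ : I → Option C) :
    matchedCount μ + (assignments μ).count none = Fintype.card I := by
  rw [← card_filter_eq_count_assignments, matchedCount, ← card_univ]
  simpa [Option.not_isSome_iff_eq_none] using
    card_filter_add_card_filter_not (s := univ) (p := fun x => (μ x).isSome)

theorem benefCount_eq_sum_count (Cstar : Finset C) (μ : I → Option C) :
    benefCount Cstar μ = ∑ c ∈ Cstar, (assignments μ).count (some c) := by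
  simp only [benefCount, card_filter_eq_count_assignments]

end Assignments

theorem Compliant.piecewise [DecidableEq I] {p : C → Option I → Option I → Prop}
    {f g : I → Option C} (hf : Compliant p f) (hg : Compliant p g) (T : Finset I) :
    Compliant p (T.piecewise f g) := by
  intro x c hx
  by_cases hxT : x ∈ T
  · exact hf x c (by rwa [T.piecewise_eq_of_mem f g hxT] at hx)
  · exact hg x c (by rwa [T.piecewise_eq_of_notMem f g hxT] at hx)

structure IsOptimalMatching [Fintype I] [DecidableEq C] (q : C → ℕ)
    (p : C → Option I → Option I → Prop) (Cstar : Finset C) (μ : I → Option C) : Prop where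
  isMatching : IsMatching q μ
  compliant : Compliant p μ
  maxCard : MaxCard q p μ
  maxBenef : MaxBenef q p Cstar μ

section SingleProfile

variable [Fintype I] [DecidableEq C] {q : C → ℕ}
  {p : C → Option I → Option I → Prop} {Cstar : Finset C} {prec : C → C → Prop}
  {μ ν ν' : I → Option C}

theorem IsOptimalMatching.of_assignments_eq (hν : IsOptimalMatching q p Cstar ν)
    (hμ : Compliant p μ) (h : assignments μ = assignments ν) :
    IsOptimalMatching q p Cstar μ where
  isMatching := isMatching_iff_count.mpr (h ▸ isMatching_iff_count.mp hν.isMatching)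
  compliant := hμ
  maxCard ρ hρ hρc := by
    have hμsplit := matchedCount_add_count_none μ
    have hνsplit := matchedCount_add_count_none ν
    rw [h] at hμsplit
    exact (hν.maxCard ρ hρ hρc).trans_eq (by omega)
  maxBenef ρ hρ hρc := by
    rw [benefCount_eq_sum_count Cstar μ, h, ← benefCount_eq_sum_count]
    exact hν.maxBenef ρ hρ hρc

variable [DecidableEq I]

theorem not_maxCard_of_augmenting_path (hν : IsMatching q ν) (hνc : Compliant p ν)
    (hν' : IsMatching q ν') (hν'c : Compliant p ν') {T : Finset I} {f : C}
    (hpath : T.val.map ν' + {none} = T.val.map ν + {some f})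
    (hstuck : ∀ x ∉ T, ν x = some f → ν' x = some f) : ¬ MaxCard q p ν := by
  set μ := T.piecewise ν' ν
  have hA : assignments μ + {none} = assignments ν + {some f} := by
    apply add_right_cancel (b := T.val.map ν)
    calc assignments μ + {none} + T.val.map ν = assignments μ + T.val.map ν + {none} := by abel
      _ = assignments ν + (T.val.map ν' + {none}) := by rw [assignments_piecewise_add]; abel
      _ = assignments ν + {some f} + T.val.map ν := by rw [hpath]; abel
  have hcount (o : Option C) := congrArg (Multiset.count o) hA
  simp only [Multiset.count_add, Multiset.count_singleton] at hcount
  have hμ : IsMatching q μ := by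
    intro c
    by_cases hc : c = f
    · subst hc
      refine (card_le_card fun x => ?_).trans (hν' c)
      simp only [mem_filter, mem_univ, true_and, μ]
      by_cases hxT : x ∈ T
      · simp [hxT]
      · simpa [hxT] using hstuck x hxT
    · have hcμ := hcount (some c)
      simp only [Option.some.injEq, hc, reduceCtorEq, if_false, add_zero] at hcμ
      rw [card_filter_eq_count_assignments, hcμ, ← card_filter_eq_count_assignments]
      exact hν c
  intro hmax
  have hle := hmax μ hμ (hν'c.piecewise hνc T)
  have hμsplit := matchedCount_add_count_none μ
  have hνsplit := matchedCount_add_count_none ν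
  have hnone := hcount none
  simp only [if_true, reduceCtorEq, if_false] at hnone
  omega

theorem not_respectsPrec_of_exchange (hp : ∀ c, Std.Asymm (p c))
    (hν : IsOptimalMatching q p Cstar ν) (hν' : Compliant p ν')
    {T : Finset I} (hbal : T.val.map ν' = T.val.map ν) {c : C} (hc : some c ∈ T.val.map ν)
    (hfirst : ∀ d, some d ∈ T.val.map ν → d ≠ c → StrictPrec prec (some c) (some d))
    {i : I} (hiT : i ∈ T) (hi' : ν' i = some c) (hi : ν i ≠ some c)
    (htop : ∀ l ∈ T, ν l = some c → p c (some i) (some l)) :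
    ¬ RespectsPrec q p Cstar prec ν := by
  obtain ⟨j, hjT, hj⟩ := Multiset.mem_map.mp hc
  have hexch : IsOptimalMatching q p Cstar (T.piecewise ν' ν) := by
    refine hν.of_assignments_eq (hν'.piecewise hν.compliant T) ?_
    apply add_right_cancel (b := T.val.map ν)
    rw [assignments_piecewise_add, hbal]
  have hnot_before : ∀ x ∈ T, ∀ d, ν x = some d → ¬ StrictPrec prec (some d) (some c) := by
    intro x hxT d hd hdc
    by_cases hdc' : d = c
    · subst hdc'
      exact hdc.2 hdc.1
    · exact (hfirst d (hd ▸ Multiset.mem_map_of_mem ν hxT) hdc').2 hdc.1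
  refine not_not_intro ⟨i, j, c, hj, ?_, htop j hjT hj, T.piecewise ν' ν, hexch.isMatching,
    hexch.compliant, ?_, ?_, by simp [hiT, hi'], hexch.maxCard, hexch.maxBenef⟩
  · cases hd : ν i with
    | none => trivial
    | some d => exact hfirst d (hd ▸ Multiset.mem_map_of_mem ν hiT) fun h => hi (h ▸ hd)
  · intro k d hk hdc
    by_cases hkT : k ∈ T
    · exact absurd hdc (hnot_before k hkT d hk)
    · exact T.piecewise_eq_of_notMem _ _ hkT
  · intro l hl hli
    by_cases hlT : l ∈ T
    · exact absurd hli ((hp c).asymm _ _ (htop l hlT hl))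
    · exact T.piecewise_eq_of_notMem _ _ hlT

theorem false_of_balanced_exchange [Finite C]
    (hprec : IsStrictTotalOrder C fun a b => StrictPrec prec (some a) (some b))
    (hp : ∀ c, IsStrictTotalOrder (Option I) (p c))
    (hν : IsOptimalMatching q p Cstar ν) (hνr : RespectsPrec q p Cstar prec ν)
    (hν' : IsOptimalMatching q p Cstar ν') (hν'r : RespectsPrec q p Cstar prec ν')
    {T : Finset I} (hT : ∀ x ∈ T, ν x ≠ ν' x) (hbal : T.val.map ν' = T.val.map ν)
    {x : I} {f : C} (hxT : x ∈ T) (hx : ν x = some f) : False := by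
  obtain ⟨c, hc, hfirst⟩ := exists_forall_rel_of_isStrictTotalOrder
    (fun a b => StrictPrec prec (some a) (some b)) (s := {d | some d ∈ T.val.map ν})
    ⟨f, show some f ∈ _ from hx ▸ Multiset.mem_map_of_mem ν hxT⟩
  obtain ⟨j, hjT, hj⟩ := Multiset.mem_map.mp hc
  obtain ⟨_, ⟨i, ⟨hiT, hic⟩, rfl⟩, htop⟩ := exists_forall_rel_of_isStrictTotalOrder (p c)
    (s := some '' {l | l ∈ T ∧ (ν l = some c ∨ ν' l = some c)}) ⟨some j, j, ⟨hjT, .inl hj⟩, rfl⟩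
  have htop' (ρ : I → Option C) (hρ : ρ = ν ∨ ρ = ν') (hi : ρ i ≠ some c) :
      ∀ l ∈ T, ρ l = some c → p c (some i) (some l) := by
    intro l hlT hl
    refine htop _ ⟨l, ⟨hlT, by rcases hρ with rfl | rfl <;> simp [hl]⟩, rfl⟩ ?_
    rintro ⟨⟩
    exact hi hl
  rcases hic with hi | hi'
  · have hi' : ν' i ≠ some c := fun h => hT i hiT (hi.trans h.symm)
    exact not_respectsPrec_of_exchange (fun c => inferInstance) hν' hν.compliant hbal.symm
      (hbal ▸ hc) (hbal ▸ hfirst) hiT hi hi' (htop' ν' (.inr rfl) hi') hν'r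
  · have hi : ν i ≠ some c := fun h => hT i hiT (h.trans hi'.symm)
    exact not_respectsPrec_of_exchange (fun c => inferInstance) hν hν'.compliant hbal
      hc hfirst hiT hi' hi (htop' ν (.inl rfl) hi) hνr

theorem false_of_alternating_path [Finite C]
    (hprec : IsStrictTotalOrder C fun a b => StrictPrec prec (some a) (some b))
    (hp : ∀ c, IsStrictTotalOrder (Option I) (p c))
    (hν : IsOptimalMatching q p Cstar ν) (hνr : RespectsPrec q p Cstar prec ν)
    (hν' : IsOptimalMatching q p Cstar ν') (hν'r : RespectsPrec q p Cstar prec ν')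
    (T : Finset I) (f : C) (hT : ∀ x ∈ T, ν x ≠ ν' x)
    (hpath : T.val.map ν' + {none} = T.val.map ν + {some f}) : False := by
  by_cases hstuck : ∀ x ∉ T, ν x = some f → ν' x = some f
  · exact not_maxCard_of_augmenting_path hν.isMatching hν.compliant hν'.isMatching
      hν'.compliant hpath hstuck hν.maxCard
  push Not at hstuck
  obtain ⟨x, hxT, hx, hx'⟩ := hstuck
  have hT' : ∀ y ∈ insert x T, ν y ≠ ν' y := by
    simpa [hx, Ne.symm hx'] using hT
  have hmap (μ : I → Option C) : (insert x T).val.map μ = {μ x} + T.val.map μ := by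
    rw [insert_val_of_notMem hxT, Multiset.map_cons, Multiset.singleton_add]
  cases hx'' : ν' x with
  | none =>
    refine false_of_balanced_exchange hprec hp hν hνr hν' hν'r hT' ?_ (mem_insert_self x T) hx
    rw [hmap, hmap, hx, hx'', add_comm, hpath, add_comm]
  | some f' =>
    refine false_of_alternating_path hprec hp hν hνr hν' hν'r (insert x T) f' hT' ?_
    rw [hmap, hmap, hx, hx'', add_assoc, hpath]
    abel
termination_by #(univ \ T)
decreasing_by
  refine card_lt_card ⟨sdiff_subset_sdiff subset_rfl (subset_insert x T), fun h => ?_⟩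
  simpa [hxT] using h (mem_sdiff.mpr ⟨mem_univ x, hxT⟩)

theorem IsOptimalMatching.eq_none_of_eq_none [Finite C]
    (hprec : IsStrictTotalOrder C fun a b => StrictPrec prec (some a) (some b))
    (hp : ∀ c, IsStrictTotalOrder (Option I) (p c))
    (hν : IsOptimalMatching q p Cstar ν) (hνr : RespectsPrec q p Cstar prec ν)
    (hν' : IsOptimalMatching q p Cstar ν') (hν'r : RespectsPrec q p Cstar prec ν')
    {u : I} (hu : ν u = none) : ν' u = none := by
  by_contra hne
  obtain ⟨f, hf⟩ := Option.ne_none_iff_exists'.mp hne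
  exact false_of_alternating_path hprec hp hν hνr hν' hν'r {u} f (by simp [hu, hf])
    (by simp [hu, hf, add_comm])

end SingleProfile

section Hiding

variable {i : I} {P P' : C → Option I → Option I → Prop}

theorem Improves.rel_of_ne_right (h : Improves i P' P) {c : C} {x y : Option I}
    (hy : y ≠ some i) (hxy : P' c x y) : P c x y := by
  by_cases hx : x = some i
  · subst hx
    exact (h c).2 y hy hxy
  · exact ((h c).1 x y hx hy).mpr hxy

theorem Improves.rel_of_ne_left (h : Improves i P' P) {c : C} [Std.Asymm (P c)]
    [Std.Trichotomous (P' c)] {x y : Option I} (hx : x ≠ some i) (hxy : P c x y) : P' c x y := by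
  by_cases hy : y = some i
  · subst hy
    rcases trichotomous_of (P' c) x (some i) with h' | rfl | h'
    · exact h'
    · exact absurd rfl hx
    · exact absurd ((h c).2 x hx h') (asymm hxy)
  · exact ((h c).1 x y hx hy).mp hxy

theorem Compliant.of_improves (h : Improves i P' P) {ρ : I → Option C} (hρ : Compliant P' ρ) :
    Compliant P ρ :=
  fun k c hk => h.rel_of_ne_right (Option.some_ne_none i).symm (hρ k c hk)

theorem Compliant.of_improves_of_unmatched (h : Improves i P' P) {ρ : I → Option C}
    (hρ : Compliant P ρ) (hi : ρ i = none) : Compliant P' ρ := by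
  intro k c hk
  have hki : some k ≠ some i := by
    rintro ⟨⟩
    simp [hi] at hk
  exact ((h c).1 _ none hki (Option.some_ne_none i).symm).mp (hρ k c hk)

variable [Fintype I] [DecidableEq C] {q : C → ℕ} {Cstar : Finset C} {μ : I → Option C}

theorem IsOptimalMatching.of_improves (h : Improves i P' P) (hμ : IsOptimalMatching q P Cstar μ)
    (hi : μ i = none) : IsOptimalMatching q P' Cstar μ where
  isMatching := hμ.isMatching
  compliant := hμ.compliant.of_improves_of_unmatched h hi
  maxCard ρ hρ hρc := hμ.maxCard ρ hρ (hρc.of_improves h)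
  maxBenef ρ hρ hρc := hμ.maxBenef ρ hρ (hρc.of_improves h)

theorem RespectsPrec.of_improves {prec : C → C → Prop} (h : Improves i P' P)
    (hP : ∀ c, Std.Asymm (P c)) (hP' : ∀ c, Std.Trichotomous (P' c))
    (hμ : IsOptimalMatching q P Cstar μ) (hi : μ i = none)
    (hresp : RespectsPrec q P Cstar prec μ) : RespectsPrec q P' Cstar prec μ := by
  rintro ⟨k, j, c, hj, hjk, hkj, ρ, hρ, hρc, hbefore, habove, hρk, hρmax, hρben⟩
  have hμ' := hμ.of_improves h hi
  have hji : some j ≠ some i := by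
    rintro ⟨⟩
    simp [hi] at hj
  refine hresp ⟨k, j, c, hj, hjk, h.rel_of_ne_right hji hkj, ρ, hρ, hρc.of_improves h, hbefore,
    fun l hl hlk => habove l hl ?_, hρk, fun σ hσ hσc => ?_, fun σ hσ hσc => ?_⟩
  · have hli : some l ≠ some i := by
      rintro ⟨⟩
      simp [hi] at hl
    exact h.rel_of_ne_left hli hlk
  · exact (hμ.maxCard σ hσ hσc).trans (hρmax μ hμ.isMatching hμ'.compliant)
  · exact (hμ.maxBenef σ hσ hσc).trans (hρben μ hμ.isMatching hμ'.compliant)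

end Hiding

/-- With a strict total precedence order over categories, if
`P'` is obtained from `P` by agent `i` hiding categories (i.e. `P` is an
`i`-improvement of `P'`), and `μ` (resp. `μ'`) is an eligibility-compliant
matching for the system with profile `P` (resp. `P'`) with maximum
cardinality and maximum beneficiary assignment respecting precedence over
categories, then `μ(i) = ∅` implies `μ'(i) = ∅`. -/
theorem SCU_no_incentive_to_hide
    [Fintype I] [Fintype C] [DecidableEq C]
    (q : C → ℕ) (Cstar : Finset C) (prec : C → C → Prop)
    (hTrans : ∀ a b c : C, prec a b → prec b c → prec a c)
    (hTotal : ∀ a b : C, prec a b ∨ prec b a)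
    (hAnti : ∀ a b : C, prec a b → prec b a → a = b)
    (P P' : C → Option I → Option I → Prop)
    (hP : ∀ c : C, IsStrictTotalOrder (Option I) (P c))
    (hP' : ∀ c : C, IsStrictTotalOrder (Option I) (P' c))
    (i : I) (hhide : Improves i P' P)
    (μ μ' : I → Option C)
    (hμ : IsMatching q μ) (hμc : Compliant P μ)
    (hmax : MaxCard q P μ) (hben : MaxBenef q P Cstar μ)
    (hresp : RespectsPrec q P Cstar prec μ)
    (hμ' : IsMatching q μ') (hμ'c : Compliant P' μ')
    (hmax' : MaxCard q P' μ') (hben' : MaxBenef q P' Cstar μ')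
    (hresp' : RespectsPrec q P' Cstar prec μ')
    (hi : μ i = none) :
    μ' i = none := by
  classical
  have hopt : IsOptimalMatching q P Cstar μ := ⟨hμ, hμc, hmax, hben⟩
  have hrespP' : RespectsPrec q P' Cstar prec μ :=
    hresp.of_improves hhide (fun _ => inferInstance) (fun _ => inferInstance) hopt hi
  exact (hopt.of_improves hhide hi).eq_none_of_eq_none
    (isStrictTotalOrder_strictPrec hTrans hTotal hAnti) hP' hrespP' ⟨hμ', hμ'c, hmax', hben'⟩
    hresp' hi
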